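/- The module (GL₁ⁿ⁺¹ × SL_n(ℂ)) acting on (ℂⁿ)^{⊕(n+1)} by (t₁,…,t_{n+1}, g)·(x₁,…,x_{n+1}) = (t₁gx₁,…,t_{n+1}gx_{n+1}) has a Zariski-dense orbit, and for each i = 1,…,n+1 the polynomial f_i(x₁,…,x_{n+1}) = det(x₁,…,x̂_i,…,x_{n+1}) (determinant of the matrix omitting the i-th vector) is a relative invariant. -/

import Mathlib

open Matrix MvPolynomial

/-!
Take `v = (e₁, …, eₙ, e₁ + ⋯ + eₙ)`. A tuple `x` whose first `n` vectors form an invertible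
matrix `M` and whose last vector is `M c` with all `cᵢ ≠ 0` equals `(t, A) · v` for
`A = M · diag c ∈ GLₙ` and `t = (c₁⁻¹, …, cₙ⁻¹, 1)`; over an algebraically closed field an
`n`-th root of `det A` moves `A` into `SLₙ` at the cost of rescaling `t`. These tuples form the
nonvanishing locus of a nonzero polynomial `Q`, so a polynomial vanishing on the orbit of `v` is
killed by `Q` and is therefore zero. Relative invariance is multiplicativity of the determinant.
-/

theorem Fin.prod_erase_eq_prod_succAbove {M : Type*} [CommMonoid M] {n : ℕ}
    (f : Fin (n + 1) → M) (i : Fin (n + 1)) :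
    ∏ j ∈ Finset.univ.erase i, f j = ∏ c, f (i.succAbove c) := by
  rw [← Finset.compl_singleton, ← Fin.image_succAbove_univ,
    Finset.prod_image fun _ _ _ _ h => i.succAbove_right_injective h]

theorem Matrix.det_of_smul_mulVec {R ι : Type*} [CommRing R] [Fintype ι] [DecidableEq ι]
    (g : Matrix ι ι R) (t : ι → R) (x : ι → ι → R) :
    (of fun r c => (t c • (g *ᵥ x c)) r).det =
      (∏ c, t c) * g.det * (of fun r c => x c r).det := by
  have h : (of fun r c => (t c • (g *ᵥ x c)) r) = g * (of fun r c => x c r) * diagonal t := by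
    ext r c
    rw [mul_diagonal]
    simp only [of_apply, Pi.smul_apply, smul_eq_mul, mul_apply, mulVec, dotProduct,
      Finset.mul_sum, Finset.sum_mul]
    exact Finset.sum_congr rfl fun _ _ => by ring
  rw [h, det_mul, det_mul, det_diagonal]
  ring

theorem Matrix.exists_smul_eq_of_det_ne_zero {K ι : Type*} [Field K] [IsAlgClosed K]
    [Fintype ι] [DecidableEq ι] (A : Matrix ι ι K) (hA : A.det ≠ 0) :
    ∃ (s : Kˣ) (g : SpecialLinearGroup ι K), A = (s : K) • g.1 := by
  cases isEmpty_or_nonempty ι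
  · exact ⟨1, 1, Subsingleton.elim _ _⟩
  obtain ⟨τ, hτ⟩ := IsAlgClosed.exists_pow_nat_eq A.det (Fintype.card_pos (α := ι))
  have hτ0 : τ ≠ 0 := by
    rintro rfl
    exact hA (by rw [← hτ, zero_pow Fintype.card_pos.ne'])
  refine ⟨Units.mk0 τ hτ0, ⟨τ⁻¹ • A, by rw [det_smul, inv_pow, hτ, inv_mul_cancel₀ hA]⟩, ?_⟩
  simp [smul_smul, hτ0]

theorem MvPolynomial.eq_zero_of_eval_eq_zero_of_eval_ne_zero {R σ : Type*} [CommRing R]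
    [IsDomain R] [Infinite R] {P Q : MvPolynomial σ R} (hQ : Q ≠ 0)
    (h : ∀ x, eval x Q ≠ 0 → eval x P = 0) : P = 0 := by
  have hPQ : P * Q = 0 := MvPolynomial.funext fun x => by
    by_cases hx : eval x Q = 0 <;> simp [hx, h]
  exact (mul_eq_zero.1 hPQ).resolve_right hQ

def genericTuple (R : Type*) [Zero R] [One R] (n : ℕ) : Fin (n + 1) → Fin n → R :=
  Fin.snoc (α := fun _ => Fin n → R) (fun k => Pi.single k 1) 1

section GenericTuple

variable {R : Type*} {n : ℕ}

@[simp]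
theorem genericTuple_castSucc [Zero R] [One R] (k : Fin n) :
    genericTuple R n k.castSucc = Pi.single k 1 :=
  Fin.snoc_castSucc ..

@[simp]
theorem genericTuple_last [Zero R] [One R] : genericTuple R n (Fin.last n) = 1 :=
  Fin.snoc_last ..

def leadingMatrix (x : Fin (n + 1) → Fin n → R) : Matrix (Fin n) (Fin n) R :=
  of fun r c => x c.castSucc r

/-- By Cramer's rule the `j`-th factor of the product is `± f_j(x)`, and
`(leadingMatrix x).det = f_{n+1}(x)`, so `genericity x = ± ∏ i, f_i(x)`. -/
def genericity [CommRing R] (x : Fin (n + 1) → Fin n → R) : R :=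
  (leadingMatrix x).det * ∏ j, ((leadingMatrix x).adjugate *ᵥ x (Fin.last n)) j

theorem RingHom.map_genericity {S : Type*} [CommRing R] [CommRing S] (f : R →+* S)
    (x : Fin (n + 1) → Fin n → R) : f (genericity x) = genericity fun i r => f (x i r) := by
  have hM : f.mapMatrix (leadingMatrix x) = leadingMatrix fun i r => f (x i r) := rfl
  simp only [genericity, map_mul, map_prod, RingHom.map_det, hM, map_mulVec,
    ← RingHom.mapMatrix_apply, RingHom.map_adjugate]
  rfl

theorem genericity_genericTuple [CommRing R] : genericity (genericTuple R n) = 1 := by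
  have h : leadingMatrix (genericTuple R n) = 1 := by
    ext r c
    simp [leadingMatrix, one_apply, Pi.single_apply]
  simp [genericity, h]

theorem exists_smul_mulVec_genericTuple_eq {K : Type*} [Field K] [IsAlgClosed K]
    (x : Fin (n + 1) → Fin n → K) (hx : genericity x ≠ 0) :
    ∃ (t : Fin (n + 1) → Kˣ) (g : SpecialLinearGroup (Fin n) K),
      ∀ i, (t i : K) • (g.1 *ᵥ genericTuple K n i) = x i := by
  set M := leadingMatrix x
  obtain ⟨hM, hadj⟩ : M.det ≠ 0 ∧ ∀ j, (M.adjugate *ᵥ x (Fin.last n)) j ≠ 0 := by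
    simpa [genericity, Finset.prod_ne_zero_iff] using hx
  set c := M.det⁻¹ • (M.adjugate *ᵥ x (Fin.last n))
  have hc : ∀ j, c j ≠ 0 := fun j => by simp [c, hM, hadj j]
  have hMc : M *ᵥ c = x (Fin.last n) := by
    rw [mulVec_smul, mulVec_mulVec, mul_adjugate, smul_mulVec, one_mulVec, smul_smul,
      inv_mul_cancel₀ hM, one_smul]
  obtain ⟨s, g, hA⟩ := exists_smul_eq_of_det_ne_zero (M * diagonal c)
    (by simp [det_mul, det_diagonal, hM, Finset.prod_ne_zero_iff, hc])
  refine ⟨Fin.snoc (α := fun _ => Kˣ) (fun k => s * (Units.mk0 (c k) (hc k))⁻¹) s, g,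
    Fin.lastCases ?_ fun k => ?_⟩
  · have hdiag : diagonal c *ᵥ 1 = c := by
      ext j
      simp [mulVec_diagonal]
    rw [Fin.snoc_last, genericTuple_last, ← smul_mulVec, ← hA, ← mulVec_mulVec, hdiag, hMc]
  · rw [Fin.snoc_castSucc, genericTuple_castSucc, Units.val_mul, mul_comm, ← smul_smul,
      ← smul_mulVec, ← hA, mulVec_single_one]
    ext r
    simp only [Units.val_inv_eq_inv_val, Units.val_mk0, M, leadingMatrix, Pi.smul_apply, col_apply,
      mul_diagonal, of_apply, smul_eq_mul]
    rw [mul_left_comm, inv_mul_cancel₀ (hc k), mul_one]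

end GenericTuple

/-- Ks I-3: the action of `GL₁ⁿ⁺¹ × SL n` on `(ℂⁿ)ⁿ⁺¹` by
`(t, g) · x = (t₁ • g x₁, …, t_{n+1} • g x_{n+1})` has a Zariski-dense orbit,
and each `f_i(x) = det(x₁, …, x̂_i, …, x_{n+1})` is a relative invariant
(with character `∏_{j ≠ i} t_j`, since `det g = 1`). -/
theorem ks_I_3_prehomogeneous (n : ℕ) :
    (∃ v : Fin (n + 1) → Fin n → ℂ,
      ∀ P : MvPolynomial (Fin (n + 1) × Fin n) ℂ,
        (∀ (t : Fin (n + 1) → ℂˣ) (g : SpecialLinearGroup (Fin n) ℂ),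
          eval (fun p => ((t p.1 : ℂ) • (g.1 *ᵥ v p.1)) p.2) P = 0) →
        ∀ x : Fin (n + 1) → Fin n → ℂ, eval (fun p => x p.1 p.2) P = 0) ∧
    (∀ (i : Fin (n + 1)) (t : Fin (n + 1) → ℂˣ) (g : SpecialLinearGroup (Fin n) ℂ)
        (x : Fin (n + 1) → Fin n → ℂ),
      (Matrix.of fun (r : Fin n) (c : Fin n) =>
          ((t (i.succAbove c) : ℂ) • (g.1 *ᵥ x (i.succAbove c))) r).det
        = (∏ j ∈ Finset.univ.erase i, (t j : ℂ)) *
            (Matrix.of fun (r : Fin n) (c : Fin n) => x (i.succAbove c) r).det) := by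
  refine ⟨⟨genericTuple ℂ n, fun P hP x => ?_⟩, fun i t g x => ?_⟩
  · set Q : MvPolynomial (Fin (n + 1) × Fin n) ℂ := genericity fun i r => X (i, r)
    have hQ_eval : ∀ y, eval y Q = genericity fun i r => y (i, r) := fun y => by
      simp only [Q, RingHom.map_genericity, eval_X]
    have hQ : Q ≠ 0 := fun h => by
      simpa [h, genericity_genericTuple] using hQ_eval fun p => genericTuple ℂ n p.1 p.2
    suffices P = 0 by simp [this]
    refine eq_zero_of_eval_eq_zero_of_eval_ne_zero hQ fun y hy => ?_
    obtain ⟨t, g, hty⟩ := exists_smul_mulVec_genericTuple_eq _ (hQ_eval y ▸ hy)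
    have horbit : (fun p => ((t p.1 : ℂ) • (g.1 *ᵥ genericTuple ℂ n p.1)) p.2) = y :=
      funext fun p => congrFun (hty p.1) p.2
    exact horbit ▸ hP t g
  · rw [det_of_smul_mulVec, g.2, Fin.prod_erase_eq_prod_succAbove, mul_one]
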